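/- arXiv:1906.08119 — 2 statements merged into one kernel-verified Lean document; each statement's English description precedes it below -/
import Mathlib

section
/- The adjoint of the Fourier coefficient map L²(S¹) → ℓ²(ℤ) is not an integral operator: there is no kernel representing T* on all of ℓ²(ℤ), since any such kernel would have to equal k(n,z) = zⁿ, whose maximal domain is ℓ¹(ℤ) ∩ ℓ²(ℤ) ⊊ ℓ²(ℤ). -/
/-! Since `|zⁿ| = 1`, absolute convergence of `Σₙ κ(n,z) aₙ` at a single point `z` where
`κ(·,z) = z^·` already forces `a ∈ ℓ¹`; and `aₙ = 1/n` (with `a₀ = 0⁻¹ = 0`) lies in `ℓ²(ℤ)` but not in `ℓ¹(ℤ)`. -/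

open MeasureTheory

lemma summable_norm_inv_intCast_pow_iff {p : ℕ} :
    (Summable fun n : ℤ => ‖(n : ℂ)⁻¹‖ ^ p) ↔ 1 < p := by
  have h (n : ℤ) : ‖(n : ℂ)⁻¹‖ ^ p = |1 / (n : ℝ) ^ p| := by
    rw [norm_inv, Complex.norm_intCast, abs_div, abs_one, abs_pow, one_div, inv_pow]
  simp only [h, summable_abs_iff]
  exact Real.summable_one_div_int_pow

lemma exists_lp_two_not_summable_norm :
    ∃ a : lp (fun _ : ℤ => ℂ) 2, ¬ Summable fun n => ‖a n‖ := by
  have h_mem : Memℓp (fun n : ℤ => (n : ℂ)⁻¹) 2 := by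
    rw [memℓp_gen_iff (by norm_num), ENNReal.toReal_ofNat]
    exact_mod_cast summable_norm_inv_intCast_pow_iff.2 one_lt_two
  refine ⟨⟨_, h_mem⟩, fun h => ?_⟩
  exact (summable_norm_inv_intCast_pow_iff (p := 1)).not.2 (lt_irrefl 1) (by simpa using h)

/-- The adjoint of the Fourier coefficient map `L²(S¹) → ℓ²(ℤ)` is not an integral
operator: there is no kernel `κ` equal (a.e.) to `zⁿ` — as any kernel representing the
adjoint would have to be — such that `Σₙ |κ(n,z) aₙ|` converges for a.e. `z` for every
`a ∈ ℓ²(ℤ)`. -/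
theorem stmt4 [Fact (0 < 2 * Real.pi)] :
    ¬ ∃ κ : ℤ → AddCircle (2 * Real.pi) → ℂ,
      (∀ n : ℤ, ∀ᵐ z ∂(volume : Measure (AddCircle (2 * Real.pi))), κ n z = fourier n z) ∧
      ∀ a : lp (fun _ : ℤ => ℂ) 2,
        ∀ᵐ z ∂(volume : Measure (AddCircle (2 * Real.pi))),
          Summable fun n : ℤ => ‖κ n z * (a : ∀ _ : ℤ, ℂ) n‖ := by
  rintro ⟨κ, hκ, h_summable⟩
  obtain ⟨a, ha⟩ := exists_lp_two_not_summable_norm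
  obtain ⟨z, hκz, hz⟩ := ((ae_all_iff.2 hκ).and (h_summable a)).exists
  refine ha (hz.congr fun n => ?_)
  have h_unit : ‖fourier n z‖ = 1 := Circle.norm_coe _
  rw [hκz n, norm_mul, h_unit, one_mul]
end

section
/- The intertwining map into the m-th piece is an isometry up to scale: the map T_m sending g ∈ V_{n−1,α+m} (holomorphic L² functions on the ball D_{n−1} with measure μ_{α+m}) to the function (z', z_n) ↦ g(z') z_n^m on D_n is a bounded injective linear map into V_{n,α} whose image is contained in the subspace of functions of the form f(z') z_n^m, and there is a constant c_{m,α} > 0 with ‖T_m g‖²_{L²(D_n, μ_α)} = c_{m,α} ‖g‖²_{L²(D_{n−1}, μ_{α+m})} for all such g. -/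
/-!
Write `z = (z', w)` with `w = z_last` and integrate first over `w` (Tonelli). For fixed `z'` in the
ball, put `s = 1 - ‖z'‖²`; the `w`-integrand is `‖g z'‖² ‖w‖^{2m} (s - ‖w‖²)^β` on the disk
`‖w‖² < s`, and the substitution `w ↦ √s • w` turns its integral into `s^{m+β+1}` times the same
integral over the unit disk, `diskMoment m β`. With `β = α - (n+2)` we have
`m + β + 1 = (α + m) - (n+1)`, which is exactly the weight on the smaller ball. The constant is
positive, and finite because `β > -1`: in polar coordinates it is dominated by
`∫₀¹ y (1 - y²)^β dy`.
-/

open MeasureTheory Set ENNReal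

theorem lintegral_eq_mul_lintegral_comp_smul {E : Type*} [NormedAddCommGroup E]
    [NormedSpace ℝ E] [MeasurableSpace E] [BorelSpace E] [FiniteDimensional ℝ E]
    (μ : Measure E) [μ.IsAddHaarMeasure] (f : E → ℝ≥0∞) {r : ℝ} (hr : 0 < r) :
    ∫⁻ x, f x ∂μ = ENNReal.ofReal (r ^ Module.finrank ℝ E) * ∫⁻ x, f (r • x) ∂μ := by
  have hr' : 0 < r ^ Module.finrank ℝ E := by positivity
  change _ = _ * ∫⁻ x, f (MeasurableEquiv.smul₀ r hr.ne' x) ∂μ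
  rw [← lintegral_map_equiv, MeasurableEquiv.coe_smul₀, Measure.map_addHaar_smul μ hr.ne',
    lintegral_smul_measure, smul_eq_mul, ← mul_assoc, abs_of_pos (inv_pos.2 hr'),
    ← ENNReal.ofReal_mul hr'.le, mul_inv_cancel₀ hr'.ne', ENNReal.ofReal_one, one_mul]

/-- The truncation to `t < s` matters: `Real.rpow` of a negative base is not zero. -/
noncomputable def sliceWeight (m : ℕ) (β s t : ℝ) : ℝ≥0∞ :=
  (Iio s).indicator (fun t => ENNReal.ofReal (t ^ m * (s - t) ^ β)) t

theorem sliceWeight_mul_left (m : ℕ) (β : ℝ) {s : ℝ} (hs : 0 < s) (t : ℝ) :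
    sliceWeight m β s (s * t) = ENNReal.ofReal (s ^ ((m : ℝ) + β)) * sliceWeight m β 1 t := by
  by_cases ht : t < 1
  · have hst : s * t < s := by nlinarith
    simp only [sliceWeight, indicator_of_mem (mem_Iio.2 ht), indicator_of_mem (mem_Iio.2 hst)]
    rw [← ENNReal.ofReal_mul (by positivity), Real.rpow_add hs, Real.rpow_natCast,
      show s - s * t = s * (1 - t) by ring, Real.mul_rpow hs.le (by linarith)]
    congr 1; ring
  · have hst : ¬ s * t < s := by nlinarith
    simp [sliceWeight, indicator_of_notMem (show t ∉ Iio 1 from ht),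
      indicator_of_notMem (show s * t ∉ Iio s from hst)]

theorem sliceWeight_of_nonpos (m : ℕ) (β : ℝ) {s t : ℝ} (hs : s ≤ 0) (ht : 0 ≤ t) :
    sliceWeight m β s t = 0 :=
  indicator_of_notMem (fun h : t ∈ Iio s => by linarith [mem_Iio.1 h]) _

@[fun_prop]
theorem Measurable.sliceWeight {α : Type*} [MeasurableSpace α] (m : ℕ) (β : ℝ) {f g : α → ℝ}
    (hf : Measurable f) (hg : Measurable g) :
    Measurable fun x => _root_.sliceWeight m β (f x) (g x) := by
  simp only [_root_.sliceWeight, indicator_apply, mem_Iio]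
  exact Measurable.ite (measurableSet_lt hg hf) (by fun_prop) measurable_const

noncomputable def diskMoment (m : ℕ) (β : ℝ) : ℝ≥0∞ :=
  ∫⁻ w : ℂ, sliceWeight m β 1 (‖w‖ ^ 2)

theorem lintegral_sliceWeight (m : ℕ) (β : ℝ) {s : ℝ} (hs : 0 < s) :
    ∫⁻ w : ℂ, sliceWeight m β s (‖w‖ ^ 2) =
      ENNReal.ofReal (s ^ ((m : ℝ) + β + 1)) * diskMoment m β := by
  have hr : 0 < √s := Real.sqrt_pos.2 hs
  have hnorm (w : ℂ) : ‖√s • w‖ ^ 2 = s * ‖w‖ ^ 2 := by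
    rw [norm_smul, mul_pow, Real.norm_of_nonneg hr.le, Real.sq_sqrt hs.le]
  rw [lintegral_eq_mul_lintegral_comp_smul volume _ hr, Complex.finrank_real_complex,
    Real.sq_sqrt hs.le]
  simp_rw [hnorm, sliceWeight_mul_left m β hs]
  rw [lintegral_const_mul' _ _ ofReal_ne_top, ← mul_assoc, ← ENNReal.ofReal_mul hs.le,
    Real.rpow_add hs _ 1, Real.rpow_one, mul_comm s, diskMoment]

theorem integrableOn_mul_one_sub_sq_rpow {β : ℝ} (hβ : -1 < β) :
    IntegrableOn (fun y : ℝ => y * (1 - y ^ 2) ^ β) (Ioc 0 1) := by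
  have hβ1 : β + 1 ≠ 0 := by linarith
  refine intervalIntegral.integrableOn_deriv_of_nonneg
    (g := fun y => -(1 - y ^ 2) ^ (β + 1) / (2 * (β + 1))) ?_ (fun y hy => ?_) (fun y hy => ?_)
  · exact (ContinuousOn.rpow_const (by fun_prop) fun _ _ => Or.inr (by linarith)).neg.div_const _
  · have h := (((hasDerivAt_pow 2 y).const_sub 1).rpow_const (p := β + 1)
      (Or.inl (by nlinarith [hy.1, hy.2]))).neg.div_const (2 * (β + 1))
    refine h.congr_deriv ?_
    rw [add_sub_cancel_right]
    field_simp
    ring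
  · exact mul_nonneg hy.1.le (Real.rpow_nonneg (by nlinarith [hy.1, hy.2]) β)

theorem sliceWeight_one_norm_sq (m : ℕ) (β : ℝ) (w : ℂ) :
    sliceWeight m β 1 (‖w‖ ^ 2) = (Metric.ball (0 : ℂ) 1).indicator
      (fun w => ENNReal.ofReal ((‖w‖ ^ 2) ^ m * (1 - ‖w‖ ^ 2) ^ β)) w := by
  have : ‖w‖ ^ 2 < 1 ↔ w ∈ Metric.ball (0 : ℂ) 1 := by
    rw [mem_ball_zero_iff, sq_lt_one_iff₀ (norm_nonneg w)]
  by_cases hw : ‖w‖ ^ 2 < 1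
  · rw [sliceWeight, indicator_of_mem (mem_Iio.2 hw), indicator_of_mem (this.1 hw)]
  · rw [sliceWeight, indicator_of_notMem (fun h => hw (mem_Iio.1 h)),
      indicator_of_notMem (fun h => hw (this.2 h))]

theorem diskMoment_lt_top (m : ℕ) {β : ℝ} (hβ : -1 < β) : diskMoment m β < ⊤ := by
  have hbound : IntegrableOn (fun y : ℝ => y ^ (Module.finrank ℝ ℂ - 1) •
      ((y ^ 2) ^ m * (1 - y ^ 2) ^ β)) (Ioo 0 1) := by
    refine ((integrableOn_mul_one_sub_sq_rpow hβ).mono_set Ioo_subset_Ioc_self).mono'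
      (by fun_prop) ((ae_restrict_mem measurableSet_Ioo).mono fun y hy => ?_)
    have hw : 0 ≤ (1 - y ^ 2) ^ β := Real.rpow_nonneg (by nlinarith [hy.1, hy.2]) β
    have hy2 : (y ^ 2) ^ m ≤ 1 := pow_le_one₀ (by positivity) (by nlinarith [hy.1, hy.2])
    rw [Complex.finrank_real_complex, smul_eq_mul, pow_one,
      Real.norm_of_nonneg (mul_nonneg hy.1.le (mul_nonneg (by positivity) hw))]
    exact mul_le_mul_of_nonneg_left (mul_le_of_le_one_left hw hy2) hy.1.le
  simp_rw [diskMoment, sliceWeight_one_norm_sq]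
  rw [lintegral_indicator measurableSet_ball]
  exact ((integrableOn_fun_norm_addHaar volume
    (f := fun y => (y ^ 2) ^ m * (1 - y ^ 2) ^ β)).2 hbound).lintegral_lt_top

theorem diskMoment_pos (m : ℕ) (β : ℝ) : 0 < diskMoment m β := by
  rw [diskMoment, lintegral_pos_iff_support (by fun_prop)]
  have hpunct : (Metric.ball (0 : ℂ) 1 \ {0}).Nonempty :=
    ⟨1 / 2, by norm_num [mem_ball_zero_iff]⟩
  refine ((Metric.isOpen_ball.sdiff isClosed_singleton).measure_pos volume hpunct).trans_le
    (measure_mono fun w hw => ?_)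
  have hw0 : 0 < ‖w‖ := norm_pos_iff.2 hw.2
  have hw1 : ‖w‖ ^ 2 < 1 := by
    rw [sq_lt_one_iff₀ hw0.le, ← mem_ball_zero_iff]; exact hw.1
  rw [Function.mem_support, sliceWeight, indicator_of_mem (mem_Iio.2 hw1)]
  exact (ENNReal.ofReal_pos.2 (mul_pos (by positivity)
    (Real.rpow_pos_of_pos (by linarith) β))).ne'

theorem lintegral_fin_succ_mul_sliceWeight (m : ℕ) (β : ℝ) {n : ℕ} {G : (Fin n → ℂ) → ℝ≥0∞}
    (hG : AEMeasurable G) :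
    ∫⁻ z : Fin (n + 1) → ℂ, G (fun i => z i.castSucc) *
        sliceWeight m β (1 - ∑ i : Fin n, ‖z i.castSucc‖ ^ 2) (‖z (Fin.last n)‖ ^ 2) =
      diskMoment m β * ∫⁻ z' in {z' : Fin n → ℂ | ∑ i, ‖z' i‖ ^ 2 < 1},
        G z' * ENNReal.ofReal ((1 - ∑ i, ‖z' i‖ ^ 2) ^ ((m : ℝ) + β + 1)) := by
  set B' := {z' : Fin n → ℂ | ∑ i, ‖z' i‖ ^ 2 < 1}
  have hB' : MeasurableSet B' := measurableSet_lt (by fun_prop) measurable_const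
  set H : ℂ × (Fin n → ℂ) → ℝ≥0∞ := fun p =>
    G p.2 * sliceWeight m β (1 - ∑ i, ‖p.2 i‖ ^ 2) (‖p.1‖ ^ 2)
  have hweight : Measurable fun p : ℂ × (Fin n → ℂ) =>
      sliceWeight m β (1 - ∑ i, ‖p.2 i‖ ^ 2) (‖p.1‖ ^ 2) := by fun_prop
  have hH : AEMeasurable H (volume.prod volume) := (hG.comp_snd).mul hweight.aemeasurable
  have hslice (z' : Fin n → ℂ) : ∫⁻ w, H (w, z') = B'.indicator (fun z' =>
      G z' * ENNReal.ofReal ((1 - ∑ i, ‖z' i‖ ^ 2) ^ ((m : ℝ) + β + 1))) z' * diskMoment m β := by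
    change ∫⁻ w, G z' * sliceWeight m β (1 - ∑ i, ‖z' i‖ ^ 2) (‖w‖ ^ 2) = _
    rw [lintegral_const_mul _ (by fun_prop)]
    by_cases hz' : z' ∈ B'
    · rw [lintegral_sliceWeight m β (sub_pos.2 hz'), indicator_of_mem hz', mul_assoc]
    · have hs : 1 - ∑ i, ‖z' i‖ ^ 2 ≤ 0 := sub_nonpos.2 (not_lt.1 hz')
      simp [sliceWeight_of_nonpos m β hs (sq_nonneg _), indicator_of_notMem hz']
  calc _ = ∫⁻ z, H (MeasurableEquiv.piFinSuccAbove (fun _ => ℂ) (Fin.last n) z) := by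
        simp [H, Fin.init_def]
    _ = ∫⁻ p, H p :=
        (volume_preserving_piFinSuccAbove (fun _ => ℂ) (Fin.last n)).lintegral_comp_emb
          (MeasurableEquiv.measurableEmbedding _) H
    _ = ∫⁻ z', ∫⁻ w, H (w, z') := by
        rw [Measure.volume_eq_prod]; exact lintegral_prod_symm H hH
    _ = _ := by
        simp_rw [hslice]
        rw [lintegral_mul_const'' _ ?_, lintegral_indicator hB', mul_comm]
        exact (hG.mul (by fun_prop : Measurable fun z' : Fin n → ℂ =>
          ENNReal.ofReal ((1 - ∑ i, ‖z' i‖ ^ 2) ^ ((m : ℝ) + β + 1))).aemeasurable).indicator hB'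

theorem sum_norm_sq_castSucc_lt_one {n : ℕ} {z : Fin (n + 1) → ℂ} (hz : ∑ i, ‖z i‖ ^ 2 < 1) :
    ∑ i : Fin n, ‖z i.castSucc‖ ^ 2 < 1 := by
  rw [Fin.sum_univ_castSucc] at hz
  linarith [sq_nonneg ‖z (Fin.last n)‖]

theorem lintegral_ball_fin_succ_mul_pow_last (m : ℕ) (β : ℝ) {n : ℕ} {g : (Fin n → ℂ) → ℂ}
    (hg : ContinuousOn g {z' : Fin n → ℂ | ∑ i, ‖z' i‖ ^ 2 < 1}) :
    ∫⁻ z in {z : Fin (n + 1) → ℂ | ∑ i, ‖z i‖ ^ 2 < 1},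
        ENNReal.ofReal (‖g (fun i => z i.castSucc) * z (Fin.last n) ^ m‖ ^ 2 *
          (1 - ∑ i, ‖z i‖ ^ 2) ^ β) =
      diskMoment m β * ∫⁻ z' in {z' : Fin n → ℂ | ∑ i, ‖z' i‖ ^ 2 < 1},
        ENNReal.ofReal (‖g z'‖ ^ 2 * (1 - ∑ i, ‖z' i‖ ^ 2) ^ ((m : ℝ) + β + 1)) := by
  set B' := {z' : Fin n → ℂ | ∑ i, ‖z' i‖ ^ 2 < 1}
  set B := {z : Fin (n + 1) → ℂ | ∑ i, ‖z i‖ ^ 2 < 1}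
  have hB' : MeasurableSet B' := measurableSet_lt (by fun_prop) measurable_const
  have hB : MeasurableSet B := measurableSet_lt (by fun_prop) measurable_const
  set G := B'.indicator fun z' => ENNReal.ofReal (‖g z'‖ ^ 2)
  have hG : AEMeasurable G := (aemeasurable_indicator_iff hB').2
    ((ENNReal.continuous_ofReal.comp_continuousOn (hg.norm.pow 2)).aemeasurable hB')
  have hG_of_mem {z'} (hz' : z' ∈ B') : G z' = ENNReal.ofReal (‖g z'‖ ^ 2) :=
    indicator_of_mem hz' _
  have hsplit (z : Fin (n + 1) → ℂ) : B.indicator (fun z =>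
      ENNReal.ofReal (‖g (fun i => z i.castSucc) * z (Fin.last n) ^ m‖ ^ 2 *
        (1 - ∑ i, ‖z i‖ ^ 2) ^ β)) z = G (fun i => z i.castSucc) *
      sliceWeight m β (1 - ∑ i : Fin n, ‖z i.castSucc‖ ^ 2) (‖z (Fin.last n)‖ ^ 2) := by
    have hsum : ∑ i, ‖z i‖ ^ 2 = ∑ i : Fin n, ‖z i.castSucc‖ ^ 2 + ‖z (Fin.last n)‖ ^ 2 :=
      Fin.sum_univ_castSucc fun i => ‖z i‖ ^ 2
    have hmem : z ∈ B ↔ ‖z (Fin.last n)‖ ^ 2 < 1 - ∑ i : Fin n, ‖z i.castSucc‖ ^ 2 := by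
      simp only [B, mem_ofPred_eq, hsum]; constructor <;> intro h <;> linarith
    by_cases hz : z ∈ B
    · rw [indicator_of_mem hz, hG_of_mem (sum_norm_sq_castSucc_lt_one hz), sliceWeight,
        indicator_of_mem (mem_Iio.2 (hmem.1 hz)), ← ENNReal.ofReal_mul (by positivity), hsum,
        norm_mul, norm_pow, mul_pow, ← pow_mul, ← pow_mul, mul_comm m 2, pow_mul,
        sub_add_eq_sub_sub, mul_assoc]
    · rw [indicator_of_notMem hz, sliceWeight,
        indicator_of_notMem (fun h => hz (hmem.2 (mem_Iio.1 h))), mul_zero]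
  rw [← lintegral_indicator hB]
  simp_rw [hsplit]
  rw [lintegral_fin_succ_mul_sliceWeight m β hG]
  congr 1
  refine setLIntegral_congr_fun hB' fun z' hz' => ?_
  rw [hG_of_mem hz', ← ENNReal.ofReal_mul (by positivity)]

theorem integrable_and_integral_eq_of_lintegral_eq {X Y : Type*} [MeasurableSpace X]
    [MeasurableSpace Y] {μ : Measure X} {ν : Measure Y} {F : X → ℝ} {f : Y → ℝ} {C : ℝ≥0∞}
    (hF0 : 0 ≤ᵐ[μ] F) (hF : AEStronglyMeasurable F μ) (hf0 : 0 ≤ᵐ[ν] f) (hf : Integrable f ν)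
    (hC : C ≠ ⊤) (h : ∫⁻ x, ENNReal.ofReal (F x) ∂μ = C * ∫⁻ y, ENNReal.ofReal (f y) ∂ν) :
    Integrable F μ ∧ ∫ x, F x ∂μ = C.toReal * ∫ y, f y ∂ν := by
  refine ⟨⟨hF, (hasFiniteIntegral_iff_ofReal hF0).2 ?_⟩, ?_⟩
  · rw [h]; exact ENNReal.mul_lt_top hC.lt_top hf.lintegral_lt_top
  · rw [integral_eq_lintegral_of_nonneg_ae hF0 hF, integral_eq_lintegral_of_nonneg_ae hf0 hf.1, h,
      ENNReal.toReal_mul]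

/-- The intertwining map `T_m : g ↦ g(z') z_nᵐ` from the weighted Bergman space of the
ball of `ℂⁿ` (weight `(1−|z'|²)^{(α+m)−(n+1)}`) into that of the ball of `ℂ^(n+1)`
(weight `(1−|z|²)^{α−(n+2)}`) is an isometry up to a fixed positive scale `c`:
`‖T_m g‖² = c ‖g‖²` for all holomorphic square-integrable `g`. -/
theorem stmt14 (n : ℕ) (α : ℝ) (hα : ((n : ℝ) + 1) < α) (m : ℕ) :
    ∃ c : ℝ, 0 < c ∧
      ∀ g : (Fin n → ℂ) → ℂ,
        DifferentiableOn ℂ g {z' : Fin n → ℂ | ∑ i, ‖z' i‖ ^ 2 < 1} →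
        IntegrableOn
          (fun z' : Fin n → ℂ =>
            ‖g z'‖ ^ 2 * (1 - ∑ i, ‖z' i‖ ^ 2) ^ ((α + m) - ((n : ℝ) + 1)))
          {z' : Fin n → ℂ | ∑ i, ‖z' i‖ ^ 2 < 1} volume →
        (IntegrableOn
          (fun z : Fin (n + 1) → ℂ =>
            ‖g (fun i => z i.castSucc) * (z (Fin.last n)) ^ m‖ ^ 2
              * (1 - ∑ i, ‖z i‖ ^ 2) ^ (α - ((n : ℝ) + 2)))
          {z : Fin (n + 1) → ℂ | ∑ i, ‖z i‖ ^ 2 < 1} volume ∧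
        ∫ z in {z : Fin (n + 1) → ℂ | ∑ i, ‖z i‖ ^ 2 < 1},
            ‖g (fun i => z i.castSucc) * (z (Fin.last n)) ^ m‖ ^ 2
              * (1 - ∑ i, ‖z i‖ ^ 2) ^ (α - ((n : ℝ) + 2)) ∂volume
          = c * ∫ z' in {z' : Fin n → ℂ | ∑ i, ‖z' i‖ ^ 2 < 1},
              ‖g z'‖ ^ 2 * (1 - ∑ i, ‖z' i‖ ^ 2) ^ ((α + m) - ((n : ℝ) + 1)) ∂volume) := by
  have hβ : -1 < α - ((n : ℝ) + 2) := by linarith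
  refine ⟨(diskMoment m _).toReal, ENNReal.toReal_pos (diskMoment_pos m _).ne'
    (diskMoment_lt_top m hβ).ne, fun g hg hgi => ?_⟩
  have hB : MeasurableSet {z : Fin (n + 1) → ℂ | ∑ i, ‖z i‖ ^ 2 < 1} :=
    measurableSet_lt (by fun_prop) measurable_const
  have hB' : MeasurableSet {z' : Fin n → ℂ | ∑ i, ‖z' i‖ ^ 2 < 1} :=
    measurableSet_lt (by fun_prop) measurable_const
  have hexp : (α + m) - ((n : ℝ) + 1) = m + (α - ((n : ℝ) + 2)) + 1 := by ring
  rw [hexp] at hgi ⊢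
  refine integrable_and_integral_eq_of_lintegral_eq ?_ ?_ ?_ hgi (diskMoment_lt_top m hβ).ne
    (lintegral_ball_fin_succ_mul_pow_last m _ hg.continuousOn)
  · filter_upwards [ae_restrict_mem hB] with z hz
    exact mul_nonneg (by positivity) (Real.rpow_nonneg (sub_nonneg.2 hz.le) _)
  · refine ContinuousOn.aestronglyMeasurable ?_ hB
    refine (((hg.continuousOn.comp (by fun_prop) fun z hz => sum_norm_sq_castSucc_lt_one hz).mul
      (by fun_prop)).norm.pow 2).mul ?_
    exact ContinuousOn.rpow_const (by fun_prop) fun z hz => Or.inl (sub_pos.2 hz).ne'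
  · filter_upwards [ae_restrict_mem hB'] with z' hz'
    exact mul_nonneg (by positivity) (Real.rpow_nonneg (sub_nonneg.2 hz'.le) _)
end
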